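/- (k-convexification commutes with the constrained search.) For every positive integer k and every ρ ∈ conv_k(ι*(P)), the pure functional F̄_p of the k-convexified theory satisfies F̄_p(ρ) = inf { Σ_{i=1}^k t_i F_p(ρ_i) : ρ_i ∈ ι*(P), t_i ≥ 0, Σ t_i = 1, Σ t_i ρ_i = ρ }; that is, the k-convexification of F_p equals the pure functional of the k-convexified theory. -/

import Mathlib

open Filter Topology

noncomputable section

variable {V H : Type*}
  [AddCommGroup V] [Module ℝ V]
  [NormedAddCommGroup H] [InnerProductSpace ℂ H]

/-- The real expectation value `⟨ψ, T ψ⟩` of an operator `T` in the vector `ψ`. -/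
def expectation (T : H →ₗ[ℂ] H) (ψ : H) : ℝ := (inner ℂ ψ (T ψ) : ℂ).re

/-- The ground state energy of the Hamiltonian `ι v + W`. -/
def energy (ι : V →ₗ[ℝ] (H →ₗ[ℂ] H)) (W : H →ₗ[ℂ] H) (v : V) : ℝ :=
  sInf {r : ℝ | ∃ ψ : H, ‖ψ‖ = 1 ∧ r = expectation (ι v + W) ψ}

/-- The density `ι*(|ψ⟩⟨ψ|)` of the pure state given by the unit vector `ψ`,
as an element of the dual space `V*`. -/
def pureDensity (ι : V →ₗ[ℝ] (H →ₗ[ℂ] H)) (ψ : H) : Module.Dual ℝ V where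
  toFun v := expectation (ι v) ψ
  map_add' v w := by simp [expectation, inner_add_right]
  map_smul' c v := by
    simp only [map_smul, LinearMap.smul_apply, expectation, RingHom.id_apply, smul_eq_mul]
    rw [← algebraMap_smul ℂ c ((ι v) ψ), Complex.coe_algebraMap, inner_smul_right]
    simp

/-- An ensemble state: a positive semidefinite operator of unit trace. -/
def IsEnsembleState (Γ : H →ₗ[ℂ] H) : Prop :=
  Γ.IsSymmetric ∧ (∀ x : H, 0 ≤ (inner ℂ x (Γ x) : ℂ).re) ∧ LinearMap.trace ℂ H Γ = 1

/-- The density `ι*(Γ)` of a state `Γ`, `v ↦ Tr(Γ ι(v))`, as an element of `V*`. -/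
def traceDensity (ι : V →ₗ[ℝ] (H →ₗ[ℂ] H)) (Γ : H →ₗ[ℂ] H) : Module.Dual ℝ V where
  toFun v := (LinearMap.trace ℂ H (ι v ∘ₗ Γ)).re
  map_add' v w := by simp [map_add, LinearMap.add_comp]
  map_smul' c v := by
    simp only [map_smul, RingHom.id_apply, smul_eq_mul]
    rw [← algebraMap_smul ℂ c (ι v), LinearMap.smul_comp, map_smul, Complex.coe_algebraMap]
    simp

/-- The pure (Levy–Lieb) universal functional `F_p`. -/
def Fp (ι : V →ₗ[ℝ] (H →ₗ[ℂ] H)) (W : H →ₗ[ℂ] H) (ρ : Module.Dual ℝ V) : ℝ :=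
  sInf {r : ℝ | ∃ ψ : H, ‖ψ‖ = 1 ∧ pureDensity ι ψ = ρ ∧ r = expectation W ψ}

/-- The ensemble (Lieb/Valone) universal functional `F_e`. -/
def Fe (ι : V →ₗ[ℝ] (H →ₗ[ℂ] H)) (W : H →ₗ[ℂ] H) (ρ : Module.Dual ℝ V) : ℝ :=
  sInf {r : ℝ | ∃ Γ : H →ₗ[ℂ] H, IsEnsembleState Γ ∧ traceDensity ι Γ = ρ ∧
    r = (LinearMap.trace ℂ H (W ∘ₗ Γ)).re}

/-- The weight space of a functional `α ∈ V*`. -/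
def weightSpace (ι : V →ₗ[ℝ] (H →ₗ[ℂ] H)) (α : Module.Dual ℝ V) : Submodule ℂ H where
  carrier := {ψ : H | ∀ v : V, ι v ψ = (α v : ℂ) • ψ}
  add_mem' := by
    intro a b ha hb v
    rw [map_add, ha v, hb v, smul_add]
  zero_mem' := by intro v; simp
  smul_mem' := by
    intro c x hx v
    rw [LinearMap.map_smul, hx v, smul_comm]

/-- The set of weights of an abelian functional theory. -/
def weights (ι : V →ₗ[ℝ] (H →ₗ[ℂ] H)) : Set (Module.Dual ℝ V) :=
  {α : Module.Dual ℝ V | weightSpace ι α ≠ ⊥}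

/-- The derivative of the density map along the set of pure states at `|Ψ⟩⟨Ψ|`,
applied to the tangent vector `φ ⊥ Ψ`: the functional `v ↦ 2 Re⟨φ, ι(v)Ψ⟩`. -/
def derivDensity (ι : V →ₗ[ℝ] (H →ₗ[ℂ] H)) (Ψ φ : H) : Module.Dual ℝ V where
  toFun v := 2 * (inner ℂ φ (ι v Ψ) : ℂ).re
  map_add' v w := by simp [inner_add_right]; ring
  map_smul' c v := by
    simp only [map_smul, LinearMap.smul_apply, RingHom.id_apply, smul_eq_mul]
    rw [← algebraMap_smul ℂ c ((ι v) Ψ), Complex.coe_algebraMap, inner_smul_right]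
    simp; ring

/-- `ρ` is a relative interior point of the convex set `C` (i.e. an interior point
of `C` within its affine span): every point of `C` lies on a segment inside `C`
having `ρ` in its (open) interior. -/
def IsRelInterior {M : Type*} [AddCommGroup M] [Module ℝ M] (C : Set M) (ρ : M) : Prop :=
  ρ ∈ C ∧ ∀ σ ∈ C, ∃ τ ∈ C, ∃ t : ℝ, 0 < t ∧ t < 1 ∧ ρ = t • σ + (1 - t) • τ

/-- Strong orthogonality: componentwise orthogonality in every weight space. -/
def StronglyOrthogonal [FiniteDimensional ℂ H] (ι : V →ₗ[ℝ] (H →ₗ[ℂ] H)) (Φ Φ' : H) : Prop :=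
  ∀ α : Module.Dual ℝ V, weightSpace ι α ≠ ⊥ →
    (inner ℂ ((weightSpace ι α).orthogonalProjectionOnto Φ)
        ((weightSpace ι α).orthogonalProjectionOnto Φ') : ℂ) = 0

/-- The `k`-convex hull of a set. -/
def convk {M : Type*} [AddCommGroup M] [Module ℝ M] (k : ℕ) (X : Set M) : Set M :=
  {ρ : M | ∃ (t : Fin k → ℝ) (x : Fin k → M),
    (∀ i, 0 ≤ t i) ∧ (∑ i, t i) = 1 ∧ (∀ i, x i ∈ X) ∧ (∑ i, t i • x i) = ρ}

/-- The operator `A ⊗ id` on `H ⊗ ℂᵏ ≅ H ⊕ ⋯ ⊕ H` (k summands). -/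
def opBar (k : ℕ) (A : H →ₗ[ℂ] H) :
    (PiLp 2 fun _ : Fin k => H) →ₗ[ℂ] (PiLp 2 fun _ : Fin k => H) where
  toFun x := WithLp.toLp 2 (fun i => A (x i))
  map_add' x y := by ext i; simp
  map_smul' c x := by ext i; simp

/-- The potential map `v ↦ ι(v) ⊗ id` of the `k`-convexified functional theory. -/
def potBar (k : ℕ) (ι : V →ₗ[ℝ] (H →ₗ[ℂ] H)) :
    V →ₗ[ℝ] ((PiLp 2 fun _ : Fin k => H) →ₗ[ℂ] (PiLp 2 fun _ : Fin k => H)) where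
  toFun v := opBar k (ι v)
  map_add' v w := by
    apply LinearMap.ext; intro x; ext i
    simp [opBar, map_add]
  map_smul' c v := by
    apply LinearMap.ext; intro x; ext i
    simp [opBar, map_smul]

/-- The subspace of potentials mapped to real multiples of the identity operator. -/
def scalarPart (ι : V →ₗ[ℝ] (H →ₗ[ℂ] H)) : Submodule ℝ V where
  carrier := {v : V | ∃ c : ℝ, ι v = c • (LinearMap.id : H →ₗ[ℂ] H)}
  add_mem' := by
    rintro a b ⟨c, hc⟩ ⟨d, hd⟩
    exact ⟨c + d, by rw [map_add, hc, hd, add_smul]⟩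
  zero_mem' := ⟨0, by simp⟩
  smul_mem' := by
    rintro a v ⟨c, hc⟩
    exact ⟨a * c, by rw [map_smul, hc, smul_smul]⟩

/-! A unit vector `Ψ = (Ψ₁, …, Ψₖ)` of `H ⊗ ℂᵏ ≅ H ⊕ ⋯ ⊕ H` is the same thing as weights
`tᵢ = ‖Ψᵢ‖²` summing to one together with unit vectors `ψᵢ` of `H` (with `Ψᵢ = √tᵢ ψᵢ`), and
both the density and the energy of `Ψ` are the corresponding convex combinations
`∑ tᵢ ι*(ψᵢ)` and `∑ tᵢ ⟨ψᵢ, W ψᵢ⟩`. Minimising over `Ψ` with a given density is therefore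
minimising `∑ tᵢ ⟨ψᵢ, W ψᵢ⟩` over all such decompositions of that density; first minimising
each `ψᵢ` at fixed `ι*(ψᵢ)` gives `∑ tᵢ F_p(ι*(ψᵢ))`. -/

theorem csInf_eq_csInf_of_forall_exists_le_add {A B : Set ℝ} (hA : BddBelow A)
    (hAB : ∀ a ∈ A, ∃ b ∈ B, b ≤ a) (hBA : ∀ b ∈ B, ∀ ε > 0, ∃ a ∈ A, a ≤ b + ε) :
    sInf A = sInf B := by
  rcases B.eq_empty_or_nonempty with rfl | hBne
  · have hAempty : A = ∅ := Set.eq_empty_of_forall_notMem fun a ha => by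
      obtain ⟨b, hb, -⟩ := hAB a ha
      exact hb
    rw [hAempty]
  obtain ⟨m, hm⟩ := hA
  obtain ⟨a₀, ha₀, -⟩ := hBA hBne.some hBne.some_mem 1 one_pos
  have hB : BddBelow B := ⟨m - 1, fun b hb => by
    obtain ⟨a, ha, hab⟩ := hBA b hb 1 one_pos
    linarith [hm ha]⟩
  refine le_antisymm (le_csInf hBne fun b hb => le_of_forall_pos_le_add fun ε hε => ?_)
    (le_csInf ⟨a₀, ha₀⟩ fun a ha => ?_)
  · obtain ⟨a, ha, hab⟩ := hBA b hb ε hε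
    exact (csInf_le ⟨m, hm⟩ ha).trans hab
  · obtain ⟨b, hb, hba⟩ := hAB a ha
    exact (csInf_le hB hb).trans hba

lemma expectation_smul (T : H →ₗ[ℂ] H) (c : ℂ) (ψ : H) :
    expectation T (c • ψ) = ‖c‖ ^ 2 * expectation T ψ := by
  simp only [expectation, map_smul, inner_smul_left, inner_smul_right, ← mul_assoc,
    Complex.mul_conj, Complex.normSq_eq_norm_sq, Complex.re_ofReal_mul]

lemma pureDensity_smul (ι : V →ₗ[ℝ] (H →ₗ[ℂ] H)) (c : ℂ) (ψ : H) :
    pureDensity ι (c • ψ) = ‖c‖ ^ 2 • pureDensity ι ψ := by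
  ext v
  exact expectation_smul _ _ _

lemma expectation_opBar (k : ℕ) (T : H →ₗ[ℂ] H) (Ψ : PiLp 2 fun _ : Fin k => H) :
    expectation (opBar k T) Ψ = ∑ i, expectation T (Ψ i) := by
  rw [expectation, PiLp.inner_apply, Complex.re_sum]
  rfl

lemma pureDensity_potBar (k : ℕ) (ι : V →ₗ[ℝ] (H →ₗ[ℂ] H)) (Ψ : PiLp 2 fun _ : Fin k => H) :
    pureDensity (potBar k ι) Ψ = ∑ i, pureDensity ι (Ψ i) := by
  ext v
  rw [LinearMap.sum_apply]
  exact expectation_opBar k (ι v) Ψ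

lemma bddBelow_expectation_sphere [FiniteDimensional ℂ H] (T : H →ₗ[ℂ] H) :
    BddBelow (expectation T '' Metric.sphere 0 1) := by
  have hT : Continuous T := T.continuous_of_finiteDimensional
  refine (isCompact_sphere 0 1).bddBelow_image (Continuous.continuousOn ?_)
  unfold expectation
  fun_prop

lemma bddBelow_Fp_set [FiniteDimensional ℂ H] (ι : V →ₗ[ℝ] (H →ₗ[ℂ] H)) (W : H →ₗ[ℂ] H)
    (ρ : Module.Dual ℝ V) :
    BddBelow {r : ℝ | ∃ ψ : H, ‖ψ‖ = 1 ∧ pureDensity ι ψ = ρ ∧ r = expectation W ψ} :=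
  (bddBelow_expectation_sphere W).mono <| by
    rintro _ ⟨ψ, hψ, -, rfl⟩
    exact ⟨ψ, mem_sphere_zero_iff_norm.mpr hψ, rfl⟩

lemma Fp_le_expectation [FiniteDimensional ℂ H] (ι : V →ₗ[ℝ] (H →ₗ[ℂ] H))
    (W : H →ₗ[ℂ] H) {ψ : H} (hψ : ‖ψ‖ = 1) :
    Fp ι W (pureDensity ι ψ) ≤ expectation W ψ :=
  csInf_le (bddBelow_Fp_set ι W _) ⟨ψ, hψ, rfl, rfl⟩

lemma exists_expectation_lt_Fp_add (ι : V →ₗ[ℝ] (H →ₗ[ℂ] H)) (W : H →ₗ[ℂ] H)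
    {σ : Module.Dual ℝ V} (hσ : ∃ ψ : H, ‖ψ‖ = 1 ∧ pureDensity ι ψ = σ) {ε : ℝ} (hε : 0 < ε) :
    ∃ ψ : H, ‖ψ‖ = 1 ∧ pureDensity ι ψ = σ ∧ expectation W ψ < Fp ι W σ + ε := by
  obtain ⟨ψ, hψ, rfl⟩ := hσ
  have hne : {r : ℝ | ∃ φ : H, ‖φ‖ = 1 ∧ pureDensity ι φ = pureDensity ι ψ ∧
      r = expectation W φ}.Nonempty := ⟨_, ψ, hψ, rfl, rfl⟩
  obtain ⟨_, ⟨φ, hφ, hφψ, rfl⟩, hlt⟩ := Real.lt_sInf_add_pos hne hε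
  exact ⟨φ, hφ, hφψ, hlt⟩

/-- The vector `∑ᵢ √tᵢ ψᵢ ⊗ eᵢ` of `H ⊗ ℂᵏ`. -/
def superpose {k : ℕ} (t : Fin k → ℝ) (ψ : Fin k → H) : PiLp 2 fun _ : Fin k => H :=
  WithLp.toLp 2 fun i => ((√(t i) : ℝ) : ℂ) • ψ i

lemma norm_ofReal_sqrt_sq {a : ℝ} (ha : 0 ≤ a) : ‖((√a : ℝ) : ℂ)‖ ^ 2 = a := by
  rw [Complex.norm_real, Real.norm_of_nonneg (Real.sqrt_nonneg a), Real.sq_sqrt ha]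

section superpose

variable {k : ℕ} {t : Fin k → ℝ} (ψ : Fin k → H)

lemma norm_superpose_sq (ht : ∀ i, 0 ≤ t i) (hψ : ∀ i, ‖ψ i‖ = 1) :
    ‖superpose t ψ‖ ^ 2 = ∑ i, t i := by
  rw [PiLp.norm_sq_eq_of_L2]
  simp only [superpose, PiLp.toLp_apply, norm_smul, hψ, mul_one,
    norm_ofReal_sqrt_sq (ht _)]

lemma pureDensity_potBar_superpose (ι : V →ₗ[ℝ] (H →ₗ[ℂ] H)) (ht : ∀ i, 0 ≤ t i) :
    pureDensity (potBar k ι) (superpose t ψ) = ∑ i, t i • pureDensity ι (ψ i) := by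
  simp only [pureDensity_potBar, superpose, pureDensity_smul,
    norm_ofReal_sqrt_sq (ht _)]

lemma expectation_opBar_superpose (W : H →ₗ[ℂ] H) (ht : ∀ i, 0 ≤ t i) :
    expectation (opBar k W) (superpose t ψ) = ∑ i, t i * expectation W (ψ i) := by
  simp only [expectation_opBar, superpose, expectation_smul,
    norm_ofReal_sqrt_sq (ht _)]

end superpose

lemma exists_superpose_eq [Nontrivial H] {k : ℕ} (Ψ : PiLp 2 fun _ : Fin k => H) :
    ∃ ψ : Fin k → H, (∀ i, ‖ψ i‖ = 1) ∧ superpose (fun i => ‖Ψ i‖ ^ 2) ψ = Ψ := by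
  obtain ⟨u, hu⟩ := exists_norm_eq H zero_le_one
  have hnormalize : ∀ φ : H, ∃ ψ : H, ‖ψ‖ = 1 ∧ ((‖φ‖ : ℝ) : ℂ) • ψ = φ := by
    intro φ
    by_cases hφ : φ = 0
    · exact ⟨u, hu, by simp [hφ]⟩
    · exact ⟨((‖φ‖⁻¹ : ℝ) : ℂ) • φ, by simp [norm_smul, hφ], by simp [smul_smul, hφ]⟩
  choose ψ hψ hψφ using fun i => hnormalize (Ψ i)
  refine ⟨ψ, hψ, ?_⟩
  ext i
  simp [superpose, Real.sqrt_sq (norm_nonneg _), hψφ]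

section decomposition

variable {k : ℕ} (ι : V →ₗ[ℝ] (H →ₗ[ℂ] H)) (W : H →ₗ[ℂ] H)

lemma exists_unit_expectation_opBar_le_add {t : Fin k → ℝ} {x : Fin k → Module.Dual ℝ V}
    (ht : ∀ i, 0 ≤ t i) (hts : ∑ i, t i = 1)
    (hx : ∀ i, ∃ ψ : H, ‖ψ‖ = 1 ∧ pureDensity ι ψ = x i) {ε : ℝ} (hε : 0 < ε) :
    ∃ Ψ : PiLp 2 (fun _ : Fin k => H), ‖Ψ‖ = 1 ∧
      pureDensity (potBar k ι) Ψ = ∑ i, t i • x i ∧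
      expectation (opBar k W) Ψ ≤ ∑ i, t i * Fp ι W (x i) + ε := by
  choose ψ hψ hψx hψε using fun i => exists_expectation_lt_Fp_add ι W (hx i) hε
  refine ⟨superpose t ψ, ?_, ?_, ?_⟩
  · rw [← pow_eq_one_iff_of_nonneg (norm_nonneg _) two_ne_zero, norm_superpose_sq ψ ht hψ, hts]
  · simp only [pureDensity_potBar_superpose _ _ ht, hψx]
  · calc expectation (opBar k W) (superpose t ψ) = ∑ i, t i * expectation W (ψ i) :=
          expectation_opBar_superpose ψ W ht
      _ ≤ ∑ i, t i * (Fp ι W (x i) + ε) :=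
          Finset.sum_le_sum fun i _ => mul_le_mul_of_nonneg_left (hψε i).le (ht i)
      _ = ∑ i, t i * Fp ι W (x i) + ε := by
          simp only [mul_add, Finset.sum_add_distrib, ← Finset.sum_mul, hts, one_mul]

lemma exists_convex_combination_le_expectation_opBar [FiniteDimensional ℂ H]
    {Ψ : PiLp 2 (fun _ : Fin k => H)} (hΨ : ‖Ψ‖ = 1) :
    ∃ (t : Fin k → ℝ) (x : Fin k → Module.Dual ℝ V), (∀ i, 0 ≤ t i) ∧ ∑ i, t i = 1 ∧
      (∀ i, ∃ ψ : H, ‖ψ‖ = 1 ∧ pureDensity ι ψ = x i) ∧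
      ∑ i, t i • x i = pureDensity (potBar k ι) Ψ ∧
      ∑ i, t i * Fp ι W (x i) ≤ expectation (opBar k W) Ψ := by
  have : Nontrivial H := by
    by_contra hH
    rw [not_nontrivial_iff_subsingleton] at hH
    have hΨ0 : Ψ = 0 := by
      ext i
      exact Subsingleton.elim _ _
    simp [hΨ0] at hΨ
  obtain ⟨ψ, hψ, hΨψ⟩ := exists_superpose_eq Ψ
  set t : Fin k → ℝ := fun i => ‖Ψ i‖ ^ 2
  have ht : ∀ i, 0 ≤ t i := fun i => sq_nonneg _
  refine ⟨t, fun i => pureDensity ι (ψ i), ht, ?_, fun i => ⟨ψ i, hψ i, rfl⟩, ?_, ?_⟩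
  · rw [← norm_superpose_sq ψ ht hψ, hΨψ, hΨ, one_pow]
  · rw [← pureDensity_potBar_superpose ψ ι ht, hΨψ]
  · calc ∑ i, t i * Fp ι W (pureDensity ι (ψ i)) ≤ ∑ i, t i * expectation W (ψ i) :=
          Finset.sum_le_sum fun i _ =>
            mul_le_mul_of_nonneg_left (Fp_le_expectation ι W (hψ i)) (ht i)
      _ = expectation (opBar k W) Ψ := by rw [← expectation_opBar_superpose ψ W ht, hΨψ]

end decomposition

theorem convexification_constrained_search_general [FiniteDimensional ℂ H]
    (ι : V →ₗ[ℝ] (H →ₗ[ℂ] H)) (W : H →ₗ[ℂ] H)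
    (k : ℕ)
    (ρ : Module.Dual ℝ V) :
    Fp (potBar k ι) (opBar k W) ρ
      = sInf {s : ℝ | ∃ (t : Fin k → ℝ) (x : Fin k → Module.Dual ℝ V),
          (∀ i, 0 ≤ t i) ∧ (∑ i, t i) = 1 ∧
          (∀ i, ∃ ψ : H, ‖ψ‖ = 1 ∧ pureDensity ι ψ = x i) ∧
          (∑ i, t i • x i) = ρ ∧ s = ∑ i, t i * Fp ι W (x i)} := by
  refine csInf_eq_csInf_of_forall_exists_le_add (bddBelow_Fp_set _ _ ρ) ?_ ?_
  · rintro _ ⟨Ψ, hΨ, rfl, rfl⟩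
    obtain ⟨t, x, ht, hts, hx, hρ, hle⟩ := exists_convex_combination_le_expectation_opBar ι W hΨ
    exact ⟨_, ⟨t, x, ht, hts, hx, hρ, rfl⟩, hle⟩
  · rintro _ ⟨t, x, ht, hts, hx, rfl, rfl⟩ ε hε
    obtain ⟨Ψ, hΨ, hρ, hle⟩ := exists_unit_expectation_opBar_le_add ι W ht hts hx hε
    exact ⟨_, ⟨Ψ, hΨ, hρ, rfl⟩, hle⟩

/-- `k`-convexification commutes with the constrained search. -/
theorem convexification_constrained_search [FiniteDimensional ℝ V] [FiniteDimensional ℂ H]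
    [Nontrivial H]
    (ι : V →ₗ[ℝ] (H →ₗ[ℂ] H)) (W : H →ₗ[ℂ] H)
    (hι : ∀ v : V, (ι v).IsSymmetric) (hW : W.IsSymmetric)
    (k : ℕ) (hk : 0 < k)
    (ρ : Module.Dual ℝ V)
    (hρ : ρ ∈ convk k {σ : Module.Dual ℝ V | ∃ ψ : H, ‖ψ‖ = 1 ∧ pureDensity ι ψ = σ}) :
    Fp (potBar k ι) (opBar k W) ρ
      = sInf {s : ℝ | ∃ (t : Fin k → ℝ) (x : Fin k → Module.Dual ℝ V),
          (∀ i, 0 ≤ t i) ∧ (∑ i, t i) = 1 ∧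
          (∀ i, ∃ ψ : H, ‖ψ‖ = 1 ∧ pureDensity ι ψ = x i) ∧
          (∑ i, t i • x i) = ρ ∧ s = ∑ i, t i * Fp ι W (x i)} :=
  convexification_constrained_search_general ι W k ρ

end
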